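/- Let G be a finite solvable group and N a normal subgroup of G with |G:N| = n and kpp_G(N) = k. Then |G| ≤ n · ∏_{i=0}^{nk-1} (nk-i)^(2^i). -/

import Mathlib

/-!
The bound `kppBound m = ∏ i < m, (m - i) ^ 2 ^ i` satisfies
`kppBound (m + 1) = (m + 1) * kppBound m ^ 2`.
A `G`-class of elements of `N` contains at most `|G : N|` classes of `N`, hence `kpp_N(N) ≤ n k`,
and it suffices to show `|H| ≤ kppBound (kpp_H(H))` for every finite solvable group `H`.
If `H ≠ 1`, a minimal normal subgroup is abelian, so `H` has a nontrivial abelian normal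
subgroup `V` of prime exponent. Prime-power elements of `H / V` lift to prime-power elements
of `H`, while the classes of `1` and of some `v ∈ V \ {1}` merge, so `kpp(H / V) < kpp(H)`.
As `V` centralizes each of its elements, every class meeting `V` has at most `|H : V|` elements,
so `|V| ≤ kpp(H) |H : V|` and `|H| ≤ kpp(H) |H / V| ^ 2`; induction on `|H|` concludes.
-/

open Subgroup

def kppBound (m : ℕ) : ℕ := ∏ i ∈ Finset.range m, (m - i) ^ 2 ^ i

lemma kppBound_succ (m : ℕ) : kppBound (m + 1) = (m + 1) * kppBound m ^ 2 := by
  unfold kppBound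
  rw [Finset.prod_range_succ', ← Finset.prod_pow]
  have h : ∀ i ∈ Finset.range m, (m + 1 - (i + 1)) ^ 2 ^ (i + 1) = ((m - i) ^ 2 ^ i) ^ 2 := by
    intro i _
    rw [pow_succ, pow_mul, Nat.add_sub_add_right]
  rw [Finset.prod_congr rfl h]
  simp [mul_comm]

lemma kppBound_pos (m : ℕ) : 0 < kppBound m :=
  Finset.prod_pos fun _ hi => pow_pos (Nat.sub_pos_of_lt (Finset.mem_range.mp hi)) _

lemma kppBound_mono : Monotone kppBound := monotone_nat_of_le_succ fun m => by
  rw [kppBound_succ]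
  calc kppBound m ≤ kppBound m ^ 2 := Nat.le_self_pow two_ne_zero _
    _ ≤ (m + 1) * kppBound m ^ 2 := Nat.le_mul_of_pos_left _ m.succ_pos

namespace Set

variable {α β : Type*}

lemma ncard_le_mul_ncard_image {f : α → β} {s : Set α} (hs : s.Finite) (n : ℕ)
    (hn : ∀ b ∈ f '' s, {a ∈ s | f a = b}.ncard ≤ n) : s.ncard ≤ n * (f '' s).ncard := by
  classical
  lift s to Finset α using hs
  rw [← Finset.coe_image, ncard_coe_finset, ncard_coe_finset]
  refine Finset.card_le_mul_card_image s n fun b hb => ?_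
  simpa [← ncard_coe_finset, Finset.coe_filter] using hn b (by simpa using hb)

lemma ncard_image_lt_ncard {f : α → β} {s : Set α} (hs : s.Finite) {a b : α} (ha : a ∈ s)
    (hb : b ∈ s) (hab : a ≠ b) (hf : f a = f b) : (f '' s).ncard < s.ncard :=
  (ncard_image_le hs).lt_of_ne fun h => hab (injOn_of_ncard_image_eq h hs ha hb hf)

end Set

section PrimePowerOrder

variable {G : Type*} [Group G]

def HasPrimePowerOrder (x : G) : Prop := ∃ p m : ℕ, p.Prime ∧ orderOf x = p ^ m

lemma hasPrimePowerOrder_one : HasPrimePowerOrder (1 : G) := ⟨2, 0, Nat.prime_two, by simp⟩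

lemma HasPrimePowerOrder.of_pow_prime_eq_one {x : G} {p : ℕ} (hp : p.Prime) (hx : x ^ p = 1) :
    HasPrimePowerOrder x := by
  rcases (Nat.dvd_prime hp).mp (orderOf_dvd_of_pow_eq_one hx) with h | h
  · exact ⟨p, 0, hp, by rw [h, pow_zero]⟩
  · exact ⟨p, 1, hp, by rw [h, pow_one]⟩

lemma HasPrimePowerOrder.coe {H : Subgroup G} {x : H} (hx : HasPrimePowerOrder x) :
    HasPrimePowerOrder (x : G) := by
  simpa only [HasPrimePowerOrder, Subgroup.orderOf_coe] using hx

/-- Every Sylow subgroup of `Q` is the image of a Sylow subgroup of `G`. -/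
lemma exists_hasPrimePowerOrder_apply_eq [Finite G] {Q : Type*} [Group Q] {f : G →* Q}
    (hf : Function.Surjective f) {y : Q} (hy : HasPrimePowerOrder y) :
    ∃ x, HasPrimePowerOrder x ∧ f x = y := by
  obtain ⟨p, m, hp, hm⟩ := hy
  have := Fact.mk hp
  have hpy : IsPGroup p (zpowers y) := IsPGroup.of_card (by rw [Nat.card_zpowers, hm])
  obtain ⟨P', hP'⟩ := hpy.exists_le_sylow
  obtain ⟨P, rfl⟩ := Sylow.mapSurjective_surjective hf p P'
  obtain ⟨x, hxP, rfl⟩ : y ∈ (P : Subgroup G).map f := hP' (mem_zpowers y)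
  obtain ⟨k, hk⟩ := IsPGroup.iff_orderOf.mp P.isPGroup' ⟨x, hxP⟩
  exact ⟨x, ⟨p, k, hp, by rwa [Subgroup.orderOf_mk] at hk⟩, rfl⟩

end PrimePowerOrder

section ConjClasses

variable {G : Type*} [Group G]

def primePowerConjClasses (G : Type*) [Group G] : Set (ConjClasses G) :=
  ConjClasses.mk '' {x | HasPrimePowerOrder x}

lemma ncard_setOf_eq_conjugatesOf (P : G → Prop) :
    {C : Set G | ∃ x, P x ∧ C = conjugatesOf x}.ncard =
      (ConjClasses.mk '' {x | P x}).ncard := by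
  have hinj : Function.Injective (ConjClasses.carrier : ConjClasses G → Set G) := by
    intro c d h
    obtain ⟨a, rfl⟩ := ConjClasses.mk_surjective c
    exact ConjClasses.mem_carrier_iff_mk_eq.mp (h ▸ ConjClasses.mem_carrier_mk)
  rw [← Set.ncard_image_of_injective _ hinj, Set.image_image]
  congr 1
  ext C
  simp only [Set.mem_ofPred_eq, Set.mem_image, eq_comm (a := C)]
  rfl

lemma ConjClasses.ncard_carrier_mk (g : G) :
    (ConjClasses.mk g).carrier.ncard = (centralizer {g}).index := by
  rw [← ConjAct.orbit_eq_carrier_conjClasses, ← MulAction.index_stabilizer,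
    centralizer_eq_comap_stabilizer]
  exact (index_comap_of_surjective _ ConjAct.toConjAct.surjective).symm

lemma ConjClasses.ncard_map_subtype_fiber_le_index (N : Subgroup G) [N.FiniteIndex]
    (c : ConjClasses G) :
    {d : ConjClasses N | ConjClasses.map N.subtype d = c}.ncard ≤ N.index := by
  obtain ⟨x, rfl⟩ := ConjClasses.mk_surjective c
  have hrep : ∀ d ∈ {d : ConjClasses N | ConjClasses.map N.subtype d = ConjClasses.mk x},
      ∃ g : G, ∃ hg : g * x * g⁻¹ ∈ N, ConjClasses.mk ⟨g * x * g⁻¹, hg⟩ = d := by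
    rintro d hd
    obtain ⟨z, rfl⟩ := ConjClasses.mk_surjective d
    obtain ⟨g, hg⟩ := isConj_iff.mp (ConjClasses.mk_eq_mk_iff_isConj.mp hd.symm)
    exact ⟨g, hg ▸ z.2, by simp only [hg]; rfl⟩
  choose! g _ hg using hrep
  -- `N (g d) = N (g e)` makes the two representatives `N`-conjugate
  have hinj : Set.InjOn (fun d => (QuotientGroup.mk (g d)⁻¹ : G ⧸ N))
      {d : ConjClasses N | ConjClasses.map N.subtype d = ConjClasses.mk x} := by
    intro d hd e he hde
    have hN : g d * (g e)⁻¹ ∈ N := by simpa using QuotientGroup.eq.mp hde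
    rw [← hg d hd, ← hg e he, ConjClasses.mk_eq_mk_iff_isConj, isConj_comm]
    exact isConj_iff.mpr ⟨⟨_, hN⟩, Subtype.ext (by simp only [coe_mul, coe_inv]; group)⟩
  calc _ ≤ (Set.univ : Set (G ⧸ N)).ncard :=
        Set.ncard_le_ncard_of_injOn _ (fun _ _ => Set.mem_univ _) hinj
    _ = N.index := by rw [Set.ncard_univ, index_eq_card]

lemma Subgroup.card_le_index_mul_ncard_conjClasses [Finite G] (V : Subgroup G)
    (hV : V ≤ centralizer V) :
    Nat.card V ≤ V.index * (ConjClasses.mk '' (V : Set G)).ncard := by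
  rw [← Nat.card_coe_set_eq]
  refine Set.ncard_le_mul_ncard_image (Set.toFinite _) _ ?_
  rintro _ ⟨w, hw, rfl⟩
  calc {x ∈ (V : Set G) | ConjClasses.mk x = ConjClasses.mk w}.ncard
      ≤ (ConjClasses.mk w).carrier.ncard :=
        Set.ncard_le_ncard (fun _ hx => ConjClasses.mem_carrier_iff_mk_eq.mpr hx.2)
    _ = (centralizer {w}).index := ConjClasses.ncard_carrier_mk w
    _ ≤ V.index := index_antitone (hV.trans (centralizer_le (Set.singleton_subset_iff.mpr hw)))

lemma Subgroup.ncard_primePowerConjClasses_le_index_mul [Finite G] (N : Subgroup G) :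
    (primePowerConjClasses N).ncard ≤
      N.index * (ConjClasses.mk '' {x : G | x ∈ N ∧ HasPrimePowerOrder x}).ncard := by
  calc (primePowerConjClasses N).ncard
      ≤ N.index * (ConjClasses.map N.subtype '' primePowerConjClasses N).ncard :=
        Set.ncard_le_mul_ncard_image (Set.toFinite _) _ fun c _ =>
          (Set.ncard_le_ncard fun _ hd => hd.2).trans
            (ConjClasses.ncard_map_subtype_fiber_le_index N c)
    _ ≤ _ := by
      refine Nat.mul_le_mul_left _ (Set.ncard_le_ncard ?_)
      rintro _ ⟨_, ⟨y, hy, rfl⟩, rfl⟩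
      exact ⟨y, ⟨y.2, hy.coe⟩, rfl⟩

lemma primePowerConjClasses_subset_image_map [Finite G] {Q : Type*} [Group Q] {f : G →* Q}
    (hf : Function.Surjective f) :
    primePowerConjClasses Q ⊆ ConjClasses.map f '' primePowerConjClasses G := by
  rintro _ ⟨y, hy, rfl⟩
  obtain ⟨x, hx, rfl⟩ := exists_hasPrimePowerOrder_apply_eq hf hy
  exact ⟨ConjClasses.mk x, ⟨x, hx, rfl⟩, rfl⟩

lemma ncard_primePowerConjClasses_quotient_lt [Finite G] (V : Subgroup G) [V.Normal] {v : G}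
    (hv : v ∈ V) (hv1 : v ≠ 1) (hvp : HasPrimePowerOrder v) :
    (primePowerConjClasses (G ⧸ V)).ncard < (primePowerConjClasses G).ncard := by
  calc (primePowerConjClasses (G ⧸ V)).ncard
      ≤ (ConjClasses.map (QuotientGroup.mk' V) '' primePowerConjClasses G).ncard :=
        Set.ncard_le_ncard
          (primePowerConjClasses_subset_image_map (QuotientGroup.mk'_surjective V))
    _ < (primePowerConjClasses G).ncard := by
      refine Set.ncard_image_lt_ncard (Set.toFinite _) ⟨1, hasPrimePowerOrder_one, rfl⟩
        ⟨v, hvp, rfl⟩ ?_ ?_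
      · rwa [Ne, ConjClasses.mk_eq_mk_iff_isConj, isConj_one_right]
      · change ConjClasses.mk (QuotientGroup.mk' V 1) = ConjClasses.mk (QuotientGroup.mk' V v)
        rw [map_one, QuotientGroup.mk'_apply, (QuotientGroup.eq_one_iff v).mpr hv]

end ConjClasses

section Solvable

variable {G : Type*} [Group G]

/-- A minimal normal subgroup `A` is abelian, as `⁅A, A⁆ < A` is normal. -/
lemma Group.IsSolvable.exists_normal_ne_bot_le_centralizer [Finite G] [Group.IsSolvable G]
    [Nontrivial G] : ∃ A : Subgroup G, A.Normal ∧ A ≠ ⊥ ∧ A ≤ centralizer A := by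
  obtain ⟨A, ⟨hAn, hA⟩, hmin⟩ :=
    wellFounded_lt.has_min {A : Subgroup G | A.Normal ∧ A ≠ ⊥}
      ⟨⊤, inferInstance, top_ne_bot⟩
  refine ⟨A, hAn, hA, (commutator_eq_bot_iff_le_centralizer).mp ?_⟩
  by_contra h
  exact hmin _ ⟨commutator_normal A A, h⟩ (Group.IsSolvable.commutator_lt_of_ne_bot hA)

def Subgroup.torsionBy (A : Subgroup G) (hA : A ≤ centralizer A) (n : ℕ) : Subgroup G where
  carrier := {x | x ∈ A ∧ x ^ n = 1}
  one_mem' := ⟨A.one_mem, one_pow n⟩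
  mul_mem' {x y} hx hy := ⟨A.mul_mem hx.1 hy.1, by
    rw [Commute.mul_pow (mem_centralizer_iff.mp (hA hy.1) x hx.1), hx.2, hy.2, one_mul]⟩
  inv_mem' hx := ⟨A.inv_mem hx.1, by rw [inv_pow, hx.2, inv_one]⟩

instance Subgroup.torsionBy_normal (A : Subgroup G) [A.Normal] (hA : A ≤ centralizer A)
    (n : ℕ) : (A.torsionBy hA n).Normal where
  conj_mem x hx g := ⟨‹A.Normal›.conj_mem x hx.1 g, by
    rw [← MulAut.conj_apply, ← map_pow, hx.2, map_one]⟩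

lemma Group.IsSolvable.exists_normal_ne_bot_le_centralizer_hasPrimePowerOrder [Finite G]
    [Group.IsSolvable G] [Nontrivial G] :
    ∃ V : Subgroup G,
      V.Normal ∧ V ≠ ⊥ ∧ V ≤ centralizer V ∧ ∀ x ∈ V, HasPrimePowerOrder x := by
  obtain ⟨A, hAn, hA, hAc⟩ := Group.IsSolvable.exists_normal_ne_bot_le_centralizer (G := G)
  obtain ⟨p, hp, hpA⟩ := Nat.exists_prime_and_dvd ((one_lt_card_iff_ne_bot A).mpr hA).ne'
  have := Fact.mk hp
  obtain ⟨⟨v, hvA⟩, hv⟩ := exists_prime_orderOf_dvd_card' p hpA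
  rw [Subgroup.orderOf_mk] at hv
  have hAp : A.torsionBy hAc p ≤ A := fun _ hx => hx.1
  refine ⟨A.torsionBy hAc p, inferInstance, ?_, ?_, ?_⟩
  · refine (ne_bot_iff_exists_ne_one).mpr ⟨⟨v, hvA, hv ▸ pow_orderOf_eq_one v⟩, ?_⟩
    rw [Ne, Subtype.ext_iff, OneMemClass.coe_one, ← orderOf_eq_one_iff, hv]
    exact hp.ne_one
  · exact hAp.trans (hAc.trans (centralizer_le hAp))
  · exact fun x hx => .of_pow_prime_eq_one hp hx.2

theorem Group.IsSolvable.card_le_kppBound [Finite G] [Group.IsSolvable G] :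
    Nat.card G ≤ kppBound (primePowerConjClasses G).ncard := by
  induction hc : Nat.card G using Nat.strong_induction_on generalizing G with
  | _ c ih =>
  subst hc
  rcases subsingleton_or_nontrivial G with hG | hG
  · rw [Nat.card_unique]
    exact kppBound_pos _
  obtain ⟨V, hVn, hV, hVc, hVp⟩ :=
    exists_normal_ne_bot_le_centralizer_hasPrimePowerOrder (G := G)
  obtain ⟨⟨v, hvV⟩, hv1⟩ := (ne_bot_iff_exists_ne_one).mp hV
  have hlt := ncard_primePowerConjClasses_quotient_lt V hvV (by simpa using hv1) (hVp v hvV)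
  obtain ⟨m, hm⟩ := Nat.exists_eq_add_one_of_ne_zero (Nat.ne_zero_of_lt hlt)
  have hcard := V.card_eq_card_quotient_mul_card_subgroup
  have hV2 := (one_lt_card_iff_ne_bot V).mpr hV
  have hQ : Nat.card (G ⧸ V) ≤ kppBound m :=
    (ih _ (by nlinarith [Nat.card_pos (α := G ⧸ V)]) rfl).trans (kppBound_mono (by omega))
  have hVcard : Nat.card V ≤ V.index * (m + 1) :=
    hm ▸ (V.card_le_index_mul_ncard_conjClasses hVc).trans
      (Nat.mul_le_mul_left _ (Set.ncard_le_ncard (Set.image_mono hVp)))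
  rw [index_eq_card] at hVcard
  calc Nat.card G = Nat.card (G ⧸ V) * Nat.card V := hcard
    _ ≤ (m + 1) * Nat.card (G ⧸ V) ^ 2 := by rw [sq]; nlinarith
    _ ≤ (m + 1) * kppBound m ^ 2 := by gcongr
    _ = kppBound (primePowerConjClasses G).ncard := by rw [hm, kppBound_succ]

end Solvable

theorem card_solvable_le_of_primePow_G_classes_general
    {G : Type*} [Group G] [Finite G] (hsolv : IsSolvable G)
    (N : Subgroup G) (n k : ℕ) (hidx : N.index = n)
    (hk : {C : Set G | ∃ x : G, x ∈ N ∧ (∃ p m : ℕ, p.Prime ∧ orderOf x = p ^ m) ∧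
        C = conjugatesOf x}.ncard = k) :
    Nat.card G ≤ n * ∏ i ∈ Finset.range (n * k), (n * k - i) ^ 2 ^ i := by
  have : Group.IsSolvable G := hsolv
  have hk' : (ConjClasses.mk '' {x : G | x ∈ N ∧ HasPrimePowerOrder x}).ncard = k := by
    rw [← hk, ← ncard_setOf_eq_conjugatesOf]
    simp only [and_assoc, HasPrimePowerOrder]
  have hN : (primePowerConjClasses N).ncard ≤ n * k :=
    hidx ▸ hk' ▸ N.ncard_primePowerConjClasses_le_index_mul
  calc Nat.card G = n * Nat.card N := by rw [← hidx, N.index_mul_card]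
    _ ≤ n * kppBound (n * k) :=
      Nat.mul_le_mul_left n (Group.IsSolvable.card_le_kppBound.trans (kppBound_mono hN))

/-- **Corollary 4.9 / Theorem B, bound for `|G|`.** If `G` is a finite
solvable group and `N ⊴ G` with `|G:N| = n` and `kpp_G(N) = k`, then
`|G| ≤ n · ∏_{i=0}^{nk-1} (nk-i)^(2^i)`. -/
theorem card_solvable_le_of_primePow_G_classes
    {G : Type*} [Group G] [Finite G] (hsolv : IsSolvable G)
    (N : Subgroup G) (hN : N.Normal) (n k : ℕ) (hidx : N.index = n)
    (hk : {C : Set G | ∃ x : G, x ∈ N ∧ (∃ p m : ℕ, p.Prime ∧ orderOf x = p ^ m) ∧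
        C = conjugatesOf x}.ncard = k) :
    Nat.card G ≤ n * ∏ i ∈ Finset.range (n * k), (n * k - i) ^ 2 ^ i :=
  card_solvable_le_of_primePow_G_classes_general hsolv N n k hidx hk
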